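/- arXiv:1811.02252 — 3 statements merged into one kernel-verified Lean document; each statement's English description precedes it below -/
import Mathlib

section
/- Energy identity with remainder for the fully discrete integrator (Lemma 5.1). Assume the symmetry condition sinc(ξ) b₁(ξ²) = (1+cos ξ) b̄₁(ξ²) for all ξ ≥ 0, assume sinc(h⟨j⟩) ≠ 0 for all j ∈ ℤ, and let f̂^K(u) = 𝒫^K(a^K(u)∂ₓ²u) with a^K = ℐ^K∘a. Let (u^K_{n+1}, u̇^K_{n+1}) and (v^K_{n+1}, v̇^K_{n+1}) be one step of the fully discrete trigonometric integrator applied to (u^K_n, u̇^K_n), (v^K_n, v̇^K_n) ∈ 𝒱^K × 𝒱^K (with internal stages u^K_{n+1/2}, v^K_{n+1/2}). Then ⦀(u^K_{n+1} − v^K_{n+1}, u̇^K_{n+1} − v̇^K_{n+1})⦀₁² = ⦀(u^K_n − v^K_n, u̇^K_n − v̇^K_n)⦀₁² + κ ℛ^K, where ℛ^K = ⟨ 2 sinc(hΩ)^{-1} b₁(V) (u^K_{n+1} − u^K_n − v^K_{n+1} + v^K_n), f̂^K(u^K_{n+1/2}) − f̂^K(v^K_{n+1/2}) ⟩₁. 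-/
open scoped Real
open Complex

noncomputable section

/-- `⟨j⟩ = √(j²+1)`. -/
def brk (j : ℤ) : ℝ := Real.sqrt ((j : ℝ) ^ 2 + 1)

/-- `sinc ξ = sin ξ / ξ`, `sinc 0 = 1`. -/
def sinc (x : ℝ) : ℝ := if x = 0 then 1 else Real.sin x / x

/-- Fourier coefficient of a 2π-periodic real-valued function. -/
def fcoeff (u : ℝ → ℝ) (j : ℤ) : ℂ :=
  (1 / (2 * Real.pi) : ℂ) *
    ∫ x in (0 : ℝ)..(2 * Real.pi), (u x : ℂ) * Complex.exp (-Complex.I * (j : ℂ) * (x : ℂ))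

/-- Squared Sobolev norm `‖u‖_s²`. -/
def sobNormSq (s : ℝ) (u : ℝ → ℝ) : ℝ :=
  ∑' j : ℤ, brk j ^ (2 * s) * ‖fcoeff u j‖ ^ 2

/-- Sobolev norm `‖u‖_s`. -/
def sobNorm (s : ℝ) (u : ℝ → ℝ) : ℝ := Real.sqrt (sobNormSq s u)

/-- Membership in `H^s` (2π-periodic with finite Sobolev norm of order `s`). -/
def memHs (s : ℝ) (u : ℝ → ℝ) : Prop :=
  Function.Periodic u (2 * Real.pi) ∧
    Summable fun j : ℤ => brk j ^ (2 * s) * ‖fcoeff u j‖ ^ 2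

/-- Norm `⦀(u,u̇)⦀_s = (‖u‖_{s+1}² + ‖u̇‖_s²)^{1/2}` of a pair. -/
def pairNorm (s : ℝ) (U : (ℝ → ℝ) × (ℝ → ℝ)) : ℝ :=
  Real.sqrt (sobNorm (s + 1) U.1 ^ 2 + sobNorm s U.2 ^ 2)

/-- Membership of a pair in `H^{s+1} × H^s`. -/
def memPair (s : ℝ) (U : (ℝ → ℝ) × (ℝ → ℝ)) : Prop :=
  memHs (s + 1) U.1 ∧ memHs s U.2

/-- Scalar product `⟨v,w⟩_s`. -/
def sobInner (s : ℝ) (v w : ℝ → ℝ) : ℝ :=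
  (∑' j : ℤ, ((brk j ^ (2 * s) : ℝ) : ℂ) * (starRingEnd ℂ (fcoeff v j) * fcoeff w j)).re

/-- Fourier multiplier with symbol `ψ(⟨j⟩)`. -/
def fmul (ψ : ℝ → ℝ) (u : ℝ → ℝ) : ℝ → ℝ := fun x =>
  (∑' j : ℤ, (ψ (brk j) : ℂ) * fcoeff u j * Complex.exp (Complex.I * (j : ℂ) * (x : ℂ))).re

/-- Quasilinear nonlinearity `f(u) = a(u) ∂ₓ²u`. -/
def fQL (a : ℝ → ℝ) (u : ℝ → ℝ) : ℝ → ℝ := fun x => a (u x) * deriv (deriv u) x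

/-- Full nonlinearity `f(u) = a(u) ∂ₓ²u + g(u, ∂ₓu)`. -/
def fFull (a : ℝ → ℝ) (g : ℝ → ℝ → ℝ) (u : ℝ → ℝ) : ℝ → ℝ := fun x =>
  a (u x) * deriv (deriv u) x + g (u x) (deriv u x)

/-- Internal stage `u_{n+1/2} = cos(½hΩ)uₙ + ½h sinc(½hΩ)u̇ₙ`. -/
def tiHalf (h : ℝ) (U : (ℝ → ℝ) × (ℝ → ℝ)) : ℝ → ℝ := fun x =>
  fmul (fun ξ => Real.cos (h / 2 * ξ)) U.1 x + fmul (fun ξ => h / 2 * sinc (h / 2 * ξ)) U.2 x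

/-- One step of the one-stage explicit trigonometric integrator with stepsize `h`,
parameter `κ`, nonlinearity `F` and coefficient functions `b1 ξ = b₁(ξ²)`,
`bb1 ξ = b̄₁(ξ²)` (so that `b₁(V)` is the multiplier with symbol `b1 (h⟨j⟩)`). -/
def tiStep (b1 bb1 : ℝ → ℝ) (h κ : ℝ) (F : (ℝ → ℝ) → ℝ → ℝ)
    (U : (ℝ → ℝ) × (ℝ → ℝ)) : (ℝ → ℝ) × (ℝ → ℝ) :=
  (fun x =>
      fmul (fun ξ => Real.cos (h * ξ)) U.1 x + fmul (fun ξ => h * sinc (h * ξ)) U.2 x +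
        κ * h ^ 2 * fmul (fun ξ => bb1 (h * ξ)) (F (tiHalf h U)) x,
   fun x =>
      fmul (fun ξ => -(ξ * Real.sin (h * ξ))) U.1 x + fmul (fun ξ => Real.cos (h * ξ)) U.2 x +
        κ * h * fmul (fun ξ => b1 (h * ξ)) (F (tiHalf h U)) x)

/-- Assumption A1 on the coefficient functions, with constant `c`. -/
def AssumptionA1 (b1 bb1 : ℝ → ℝ) (c : ℝ) : Prop :=
  (∀ ξ : ℝ, 0 ≤ ξ → sinc ξ * b1 ξ = (1 + Real.cos ξ) * bb1 ξ) ∧ 0 < c ∧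
    ∀ ξ : ℝ, 0 ≤ ξ →
      |ξ * bb1 ξ| ≤ c ∧ |ξ ^ 2 * bb1 ξ| ≤ c ∧ |bb1 ξ - 1 / 2 * sinc (ξ / 2)| ≤ c * ξ ∧
        |ξ * b1 ξ| ≤ c ∧ |b1 ξ - Real.cos (ξ / 2)| ≤ c * ξ ^ 2 ∧
          (sinc ξ ≠ 0 → |ξ * b1 ξ / sinc ξ| ≤ c)

/-- Time derivative `∂ₜu(·,t)` of a space-time function. -/
def udot (u : ℝ → ℝ → ℝ) (t : ℝ) : ℝ → ℝ := fun x => deriv (fun τ => u τ x) t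

/-- `u` solves `∂ₜ²u = ∂ₓ²u − u + κ a(u)∂ₓ²u + κ g(u,∂ₓu)` on `[0,T]`,
2π-periodic in space. -/
def IsExactSol (κ : ℝ) (a : ℝ → ℝ) (g : ℝ → ℝ → ℝ) (T : ℝ) (u : ℝ → ℝ → ℝ) : Prop :=
  (∀ t x : ℝ, u t (x + 2 * Real.pi) = u t x) ∧
    ∀ t ∈ Set.Icc (0 : ℝ) T, ∀ x : ℝ,
      deriv (deriv (fun τ => u τ x)) t =
        deriv (deriv (u t)) x - u t x + κ * a (u t x) * deriv (deriv (u t)) x +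
          κ * g (u t x) (deriv (u t) x)

/-- Assumption A2 with parameter `s`, bound `M`, on `[0,T]`. -/
def AssumptionA2 (κ : ℝ) (a : ℝ → ℝ) (s M T : ℝ) (u : ℝ → ℝ → ℝ) : Prop :=
  (∀ t ∈ Set.Icc (0 : ℝ) T,
      memHs (5 + s) (u t) ∧ memHs (4 + s) (udot u t) ∧
        pairNorm (4 + s) (u t, udot u t) ≤ M) ∧
    ∃ δ A₀ : ℝ, 0 < δ ∧ δ < 1 ∧ 0 ≤ A₀ ∧
      ∀ t ∈ Set.Icc (0 : ℝ) T, ∀ x : ℝ,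
        δ ≤ 1 + κ * a (u t x) ∧ κ * a (u t x) ≤ A₀

/-- The `L²`-orthogonal projection `𝒫^K` onto trigonometric polynomials of degree `≤ K`. -/
def projK (K : ℕ) (u : ℝ → ℝ) : ℝ → ℝ := fun x =>
  (∑ j ∈ Finset.Icc (-(K : ℤ)) (K : ℤ),
      fcoeff u j * Complex.exp (Complex.I * (j : ℂ) * (x : ℂ))).re

/-- Coefficients of trigonometric interpolation in the `2K+1` equidistant points. -/
def interpCoeff (K : ℕ) (u : ℝ → ℝ) (j : ℤ) : ℂ :=
  (1 / (2 * (K : ℂ) + 1)) *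
    ∑ k ∈ Finset.range (2 * K + 1),
      ((u (2 * Real.pi * (k : ℝ) / (2 * (K : ℝ) + 1)) : ℝ) : ℂ) *
        Complex.exp (-Complex.I * (j : ℂ) * ((2 * Real.pi * (k : ℝ) / (2 * (K : ℝ) + 1) : ℝ) : ℂ))

/-- Trigonometric interpolation `ℐ^K`. -/
def interpK (K : ℕ) (u : ℝ → ℝ) : ℝ → ℝ := fun x =>
  (∑ j ∈ Finset.Icc (-(K : ℤ)) (K : ℤ),
      interpCoeff K u j * Complex.exp (Complex.I * (j : ℂ) * (x : ℂ))).re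

/-- `f̂^K(u) = 𝒫^K(a^K(u) ∂ₓ²u)` with `a^K = ℐ^K ∘ a` (quasilinear case). -/
def fhatK (K : ℕ) (a : ℝ → ℝ) (u : ℝ → ℝ) : ℝ → ℝ :=
  projK K fun x => interpK K (fun y => a (u y)) x * deriv (deriv u) x

/-- `f̂^K(u) = 𝒫^K(a^K(u) ∂ₓ²u + g^K(u,∂ₓu))` with `a^K = ℐ^K∘a`, `g^K = ℐ^K∘g`. -/
def fhatFullK (K : ℕ) (a : ℝ → ℝ) (g : ℝ → ℝ → ℝ) (u : ℝ → ℝ) : ℝ → ℝ :=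
  projK K fun x =>
    interpK K (fun y => a (u y)) x * deriv (deriv u) x +
      interpK K (fun y => g (u y) (deriv u y)) x

/-- Membership in the space `𝒱^K` of trigonometric polynomials of degree `≤ K`. -/
def memVK (K : ℕ) (v : ℝ → ℝ) : Prop :=
  ∃ c : ℤ → ℂ, ∀ x : ℝ,
    v x = (∑ j ∈ Finset.Icc (-(K : ℤ)) (K : ℤ),
        c j * Complex.exp (Complex.I * (j : ℂ) * (x : ℂ))).re

/-- The linear flow `Φ_{t,L}`. -/
def PhiL (t : ℝ) (U : (ℝ → ℝ) × (ℝ → ℝ)) : (ℝ → ℝ) × (ℝ → ℝ) :=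
  (fun x => fmul (fun ξ => Real.cos (t * ξ)) U.1 x + fmul (fun ξ => t * sinc (t * ξ)) U.2 x,
   fun x => fmul (fun ξ => -(ξ * Real.sin (t * ξ))) U.1 x + fmul (fun ξ => Real.cos (t * ξ)) U.2 x)

/-- The nonlinear flow `Φ_{t,NL}` (the multiplier `Υ(hΩ)` is built with the full stepsize `h`). -/
def PhiNL (t h : ℝ) (Y : ℝ → ℝ) (N : (ℝ → ℝ) → ℝ → ℝ) (U : (ℝ → ℝ) × (ℝ → ℝ)) :
    (ℝ → ℝ) × (ℝ → ℝ) :=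
  (U.1, fun x => U.2 x + t * fmul (fun ξ => Y (h * ξ)) (N U.1) x)

lemma brk_pos (j : ℤ) : 0 < brk j := by
  unfold brk; positivity

lemma brk_neg (j : ℤ) : brk (-j) = brk j := by
  unfold brk; push_cast; rw [neg_pow]; norm_num

lemma sin_eq_sinc {x : ℝ} (hx : x ≠ 0) : Real.sin x = x * sinc x := by
  unfold sinc; rw [if_neg hx]; field_simp

open intervalIntegral in
lemma integral_exp_int (n : ℤ) :
    (∫ x in (0:ℝ)..(2*Real.pi), Complex.exp (Complex.I * (n:ℂ) * (x:ℂ)))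
      = if n = 0 then ((2*Real.pi : ℝ) : ℂ) else 0 := by
  rcases eq_or_ne n 0 with h | h
  · simp [h]
  · rw [if_neg h]
    have hc : (Complex.I * (n:ℂ)) ≠ 0 := by
      simp [Complex.I_ne_zero, h]
    have := integral_exp_mul_complex (a := 0) (b := 2*Real.pi) hc
    simp only [mul_assoc] at this ⊢
    rw [this]
    have h2 : Complex.exp (Complex.I * ((n:ℂ) * (((2:ℝ)*Real.pi : ℝ):ℂ))) = 1 := by
      rw [show Complex.I * ((n:ℂ) * (((2:ℝ)*Real.pi : ℝ):ℂ)) = (n:ℂ) * (2*(Real.pi:ℂ)*Complex.I) by push_cast; ring]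
      exact Complex.exp_int_mul_two_pi_mul_I n
    rw [h2]
    simp

lemma conj_intervalIntegral (f : ℝ → ℂ) (a b : ℝ) :
    starRingEnd ℂ (∫ x in a..b, f x) = ∫ x in a..b, starRingEnd ℂ (f x) := by
  rw [intervalIntegral, intervalIntegral, map_sub, ← integral_conj, ← integral_conj]

lemma fcoeff_conj_neg (u : ℝ → ℝ) (j : ℤ) :
    starRingEnd ℂ (fcoeff u (-j)) = fcoeff u j := by
  unfold fcoeff
  rw [map_mul, conj_intervalIntegral]
  have h1 : starRingEnd ℂ (1 / (2 * Real.pi) : ℂ) = (1 / (2 * Real.pi) : ℂ) := by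
    have : ((1 / (2 * Real.pi) : ℝ) : ℂ) = (1 / (2 * Real.pi) : ℂ) := by push_cast; ring
    rw [← this, Complex.conj_ofReal]
  rw [h1]
  congr 1
  apply intervalIntegral.integral_congr
  intro x _
  simp only [map_mul, Complex.conj_ofReal, ← Complex.exp_conj]
  congr 2
  simp only [map_mul, map_neg, Complex.conj_I, Complex.conj_ofReal, map_intCast]
  push_cast
  ring

lemma fcoeff_trig (K : ℕ) (c : ℤ → ℂ) (j : ℤ) :
    fcoeff (fun x => (∑ k ∈ Finset.Icc (-(K:ℤ)) (K:ℤ),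
        c k * Complex.exp (Complex.I * (k:ℂ) * (x:ℂ))).re) j
      = if j ∈ Finset.Icc (-(K:ℤ)) (K:ℤ)
          then (c j + starRingEnd ℂ (c (-j))) / 2 else 0 := by
  unfold fcoeff
  have hre : ∀ z : ℂ, ((z.re : ℝ) : ℂ) = (z + starRingEnd ℂ z) / 2 := by
    intro z
    rw [Complex.add_conj]
    push_cast; ring
  have hinteg : ∀ (m : ℤ) (d : ℂ), IntervalIntegrable
      (fun x : ℝ => d * Complex.exp (Complex.I * (m:ℂ) * (x:ℂ))) MeasureTheory.volume 0 (2*Real.pi) := by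
    intro m d
    apply Continuous.intervalIntegrable
    fun_prop
  have key : (∫ x in (0:ℝ)..(2*Real.pi),
      ((∑ k ∈ Finset.Icc (-(K:ℤ)) (K:ℤ), c k * Complex.exp (Complex.I * (k:ℂ) * (x:ℂ))).re : ℂ)
        * Complex.exp (-Complex.I * (j:ℂ) * (x:ℂ)))
      = ∫ x in (0:ℝ)..(2*Real.pi),
        ((∑ k ∈ Finset.Icc (-(K:ℤ)) (K:ℤ), ((c k / 2) * Complex.exp (Complex.I * ((k - j :ℤ):ℂ) * (x:ℂ))
          + (starRingEnd ℂ (c k) / 2) * Complex.exp (Complex.I * ((-k - j :ℤ):ℂ) * (x:ℂ))))) := by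
    apply intervalIntegral.integral_congr
    intro x _
    dsimp only
    rw [hre]
    rw [map_sum]
    rw [div_mul_eq_mul_div, add_mul, add_div, Finset.sum_mul, Finset.sum_mul,
      Finset.sum_div, Finset.sum_div, Finset.sum_add_distrib]
    congr 1
    · apply Finset.sum_congr rfl
      intro k _
      rw [mul_assoc, ← Complex.exp_add]
      have : Complex.I * (k:ℂ) * (x:ℂ) + -Complex.I * (j:ℂ) * (x:ℂ)
          = Complex.I * ((k - j : ℤ):ℂ) * (x:ℂ) := by push_cast; ring
      rw [this]; ring
    · apply Finset.sum_congr rfl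
      intro k _
      rw [map_mul, ← Complex.exp_conj, mul_assoc, ← Complex.exp_add]
      have : starRingEnd ℂ (Complex.I * (k:ℂ) * (x:ℂ)) + -Complex.I * (j:ℂ) * (x:ℂ)
          = Complex.I * ((-k - j : ℤ):ℂ) * (x:ℂ) := by
        simp only [map_mul, Complex.conj_I, Complex.conj_ofReal, map_intCast]
        push_cast; ring
      rw [this]; ring
  rw [key]
  rw [intervalIntegral.integral_finset_sum (fun k _ => ((hinteg _ _).add (hinteg _ _)))]
  have hpi : (Real.pi : ℝ) ≠ 0 := Real.pi_ne_zero
  have hsum : ∀ k ∈ Finset.Icc (-(K:ℤ)) (K:ℤ),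
      (∫ x in (0:ℝ)..(2*Real.pi), ((c k / 2) * Complex.exp (Complex.I * ((k - j :ℤ):ℂ) * (x:ℂ))
          + (starRingEnd ℂ (c k) / 2) * Complex.exp (Complex.I * ((-k - j :ℤ):ℂ) * (x:ℂ))))
        = (c k / 2) * (if k - j = 0 then ((2*Real.pi : ℝ):ℂ) else 0)
          + (starRingEnd ℂ (c k) / 2) * (if -k - j = 0 then ((2*Real.pi : ℝ):ℂ) else 0) := by
    intro k _
    rw [intervalIntegral.integral_add (hinteg _ _) (hinteg _ _),
      intervalIntegral.integral_const_mul, intervalIntegral.integral_const_mul,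
      integral_exp_int, integral_exp_int]
  rw [Finset.sum_congr rfl hsum]
  rw [Finset.sum_add_distrib]
  have e1 : (∑ k ∈ Finset.Icc (-(K:ℤ)) (K:ℤ),
      (c k / 2) * (if k - j = 0 then ((2*Real.pi : ℝ):ℂ) else 0))
      = if j ∈ Finset.Icc (-(K:ℤ)) (K:ℤ) then (c j / 2) * ((2*Real.pi : ℝ):ℂ) else 0 := by
    simp only [sub_eq_zero, mul_ite, mul_zero]
    exact Finset.sum_ite_eq' _ _ _
  have e2 : (∑ k ∈ Finset.Icc (-(K:ℤ)) (K:ℤ),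
      (starRingEnd ℂ (c k) / 2) * (if -k - j = 0 then ((2*Real.pi : ℝ):ℂ) else 0))
      = if j ∈ Finset.Icc (-(K:ℤ)) (K:ℤ) then (starRingEnd ℂ (c (-j)) / 2) * ((2*Real.pi : ℝ):ℂ) else 0 := by
    have hiff : ∀ k : ℤ, -k - j = 0 ↔ k = -j := by intro k; omega
    simp only [hiff, mul_ite, mul_zero]
    rw [Finset.sum_ite_eq' _ (-j) (fun k => starRingEnd ℂ (c k) / 2 * ((2*Real.pi : ℝ):ℂ))]
    have : -j ∈ Finset.Icc (-(K:ℤ)) (K:ℤ) ↔ j ∈ Finset.Icc (-(K:ℤ)) (K:ℤ) := by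
      simp only [Finset.mem_Icc]; omega
    simp only [this]
  rw [e1, e2]
  by_cases hj : j ∈ Finset.Icc (-(K:ℤ)) (K:ℤ)
  · rw [if_pos hj, if_pos hj, if_pos hj]
    have h2pi : ((Real.pi : ℝ):ℂ) ≠ 0 := by
      simp [Real.pi_ne_zero]
    field_simp
    push_cast; ring
  · rw [if_neg hj, if_neg hj, if_neg hj]
    simp

lemma fcoeff_ext {v w : ℝ → ℝ} (h : ∀ x, v x = w x) : ∀ j, fcoeff v j = fcoeff w j :=
  fun j => congrArg (fun u => fcoeff u j) (funext h)

lemma memVK_vanish {K : ℕ} {v : ℝ → ℝ} (hv : memVK K v) :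
    ∀ j ∉ Finset.Icc (-(K:ℤ)) (K:ℤ), fcoeff v j = 0 := by
  obtain ⟨c, hc⟩ := hv
  intro j hj
  rw [fcoeff_ext hc j, fcoeff_trig, if_neg hj]

lemma sum_neg_reindex (K : ℕ) (f : ℤ → ℂ) :
    ∑ j ∈ Finset.Icc (-(K:ℤ)) (K:ℤ), f (-j) = ∑ j ∈ Finset.Icc (-(K:ℤ)) (K:ℤ), f j := by
  apply Finset.sum_nbij' (fun j => -j) (fun j => -j) <;>
    simp [Finset.mem_Icc] <;> omega

lemma memVK_repr {K : ℕ} {v : ℝ → ℝ} (hv : memVK K v) :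
    ∀ x, v x = (∑ j ∈ Finset.Icc (-(K:ℤ)) (K:ℤ),
        fcoeff v j * Complex.exp (Complex.I * (j : ℂ) * (x : ℂ))).re := by
  obtain ⟨c, hc⟩ := hv
  intro x
  have hf : ∀ j ∈ Finset.Icc (-(K:ℤ)) (K:ℤ),
      fcoeff v j * Complex.exp (Complex.I * (j : ℂ) * (x : ℂ))
        = ((c j + starRingEnd ℂ (c (-j))) / 2) * Complex.exp (Complex.I * (j : ℂ) * (x : ℂ)) := by
    intro j hj
    rw [fcoeff_ext hc j, fcoeff_trig, if_pos hj]
  rw [Finset.sum_congr rfl hf]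
  have expand : ∑ j ∈ Finset.Icc (-(K:ℤ)) (K:ℤ),
      ((c j + starRingEnd ℂ (c (-j))) / 2) * Complex.exp (Complex.I * (j : ℂ) * (x : ℂ))
      = ((∑ j ∈ Finset.Icc (-(K:ℤ)) (K:ℤ), c j * Complex.exp (Complex.I * (j : ℂ) * (x : ℂ)))
        + (∑ j ∈ Finset.Icc (-(K:ℤ)) (K:ℤ), starRingEnd ℂ (c (-j)) * Complex.exp (Complex.I * (j : ℂ) * (x : ℂ)))) / 2 := by
    symm
    rw [← Finset.sum_add_distrib, Finset.sum_div]
    symm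
    apply Finset.sum_congr rfl
    intro j _
    ring
  rw [expand]
  have hconj : ∑ j ∈ Finset.Icc (-(K:ℤ)) (K:ℤ),
      starRingEnd ℂ (c (-j)) * Complex.exp (Complex.I * (j : ℂ) * (x : ℂ))
      = starRingEnd ℂ (∑ j ∈ Finset.Icc (-(K:ℤ)) (K:ℤ),
          c j * Complex.exp (Complex.I * (j : ℂ) * (x : ℂ))) := by
    rw [map_sum, ← sum_neg_reindex K (fun j => starRingEnd ℂ (c j * Complex.exp (Complex.I * (j : ℂ) * (x : ℂ))))]
    apply Finset.sum_congr rfl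
    intro j _
    rw [map_mul, ← Complex.exp_conj]
    congr 2
    simp only [map_mul, Complex.conj_I, Complex.conj_ofReal, map_intCast]
    push_cast; ring
  rw [hconj, hc x]
  set S := ∑ j ∈ Finset.Icc (-(K:ℤ)) (K:ℤ), c j * Complex.exp (Complex.I * (j : ℂ) * (x : ℂ))
  rw [Complex.add_conj]
  simp

lemma vk_build {K : ℕ} {v : ℝ → ℝ} (c : ℤ → ℂ)
    (hsymm : ∀ j, starRingEnd ℂ (c (-j)) = c j)
    (hvan : ∀ j ∉ Finset.Icc (-(K:ℤ)) (K:ℤ), c j = 0)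
    (hrep : ∀ x, v x = (∑ j ∈ Finset.Icc (-(K:ℤ)) (K:ℤ),
        c j * Complex.exp (Complex.I * (j : ℂ) * (x : ℂ))).re) :
    memVK K v ∧ ∀ j, fcoeff v j = c j := by
  refine ⟨⟨c, hrep⟩, fun j => ?_⟩
  rw [fcoeff_ext hrep j, fcoeff_trig]
  by_cases hj : j ∈ Finset.Icc (-(K:ℤ)) (K:ℤ)
  · rw [if_pos hj, hsymm j]
    ring
  · rw [if_neg hj, hvan j hj]

lemma fcoeff_symm_of_vk {K : ℕ} {v : ℝ → ℝ} (hv : memVK K v) (j : ℤ) :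
    starRingEnd ℂ (fcoeff v (-j)) = fcoeff v j := fcoeff_conj_neg v j

lemma vk_fmul {K : ℕ} {ψ : ℝ → ℝ} {v : ℝ → ℝ} (hv : memVK K v) :
    memVK K (fmul ψ v) ∧ ∀ j, fcoeff (fmul ψ v) j = (ψ (brk j) : ℂ) * fcoeff v j := by
  apply vk_build
  · intro j
    rw [map_mul, Complex.conj_ofReal, brk_neg, fcoeff_conj_neg]
  · intro j hj
    rw [memVK_vanish hv j hj, mul_zero]
  · intro x
    unfold fmul
    congr 1
    apply tsum_eq_sum
    intro b hb
    rw [memVK_vanish hv b hb, mul_zero, zero_mul]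

lemma vk_add {K : ℕ} {v w : ℝ → ℝ} (hv : memVK K v) (hw : memVK K w) :
    memVK K (fun x => v x + w x) ∧
      ∀ j, fcoeff (fun x => v x + w x) j = fcoeff v j + fcoeff w j := by
  apply vk_build
  · intro j
    rw [map_add, fcoeff_conj_neg, fcoeff_conj_neg]
  · intro j hj
    rw [memVK_vanish hv j hj, memVK_vanish hw j hj, add_zero]
  · intro x
    rw [memVK_repr hv x, memVK_repr hw x, ← Complex.add_re, ← Finset.sum_add_distrib]
    congr 1
    apply Finset.sum_congr rfl
    intro j _
    ring

lemma vk_smul {K : ℕ} (r : ℝ) {v : ℝ → ℝ} (hv : memVK K v) :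
    memVK K (fun x => r * v x) ∧
      ∀ j, fcoeff (fun x => r * v x) j = (r : ℂ) * fcoeff v j := by
  apply vk_build
  · intro j
    rw [map_mul, Complex.conj_ofReal, fcoeff_conj_neg]
  · intro j hj
    rw [memVK_vanish hv j hj, mul_zero]
  · intro x
    rw [memVK_repr hv x]
    have : ∀ z : ℂ, r * z.re = ((r:ℂ) * z).re := by
      intro z; simp [Complex.mul_re]
    rw [this, Finset.mul_sum]
    congr 1
    apply Finset.sum_congr rfl
    intro j _
    ring

lemma vk_sub {K : ℕ} {v w : ℝ → ℝ} (hv : memVK K v) (hw : memVK K w) :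
    memVK K (fun x => v x - w x) ∧
      ∀ j, fcoeff (fun x => v x - w x) j = fcoeff v j - fcoeff w j := by
  have hw' := vk_smul (-1) hw
  have h := vk_add hv hw'.1
  constructor
  · refine ⟨(h.1.choose), fun x => ?_⟩
    have := h.1.choose_spec x
    simpa [sub_eq_add_neg] using this
  · intro j
    have e1 : fcoeff (fun x => v x - w x) j
        = fcoeff (fun x => v x + (-1 : ℝ) * w x) j := by
      apply fcoeff_ext
      intro x; ring
    rw [e1, h.2 j, hw'.2 j]
    push_cast
    ring

lemma sobNormSq_fin {K : ℕ} (s : ℝ) {v : ℝ → ℝ} (hv : memVK K v) :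
    sobNormSq s v = ∑ j ∈ Finset.Icc (-(K:ℤ)) (K:ℤ), brk j ^ (2*s) * ‖fcoeff v j‖ ^ 2 := by
  unfold sobNormSq
  apply tsum_eq_sum
  intro b hb
  rw [memVK_vanish hv b hb]
  simp

lemma sobInner_fin {K : ℕ} (s : ℝ) {v w : ℝ → ℝ} (hv : memVK K v) :
    sobInner s v w = ∑ j ∈ Finset.Icc (-(K:ℤ)) (K:ℤ),
      (((brk j ^ (2*s) : ℝ) : ℂ) * (starRingEnd ℂ (fcoeff v j) * fcoeff w j)).re := by
  unfold sobInner
  rw [tsum_eq_sum (s := Finset.Icc (-(K:ℤ)) (K:ℤ))]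
  · exact Complex.re_sum _ _
  · intro b hb
    rw [memVK_vanish hv b hb]
    simp

lemma sobNorm_sq (s : ℝ) (u : ℝ → ℝ) : sobNorm s u ^ 2 = sobNormSq s u := by
  unfold sobNorm
  rw [Real.sq_sqrt]
  apply tsum_nonneg
  intro j
  exact mul_nonneg (Real.rpow_nonneg (brk_pos j).le _) (by positivity)

lemma pairNorm_sq (s : ℝ) (X : (ℝ → ℝ) × (ℝ → ℝ)) :
    pairNorm s X ^ 2 = sobNormSq (s+1) X.1 + sobNormSq s X.2 := by
  unfold pairNorm
  rw [Real.sq_sqrt (by positivity), sobNorm_sq, sobNorm_sq]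

lemma vk_add' {K : ℕ} {v w : ℝ → ℝ} (hv : memVK K v) (hw : memVK K w) :
    memVK K (v + w) ∧ ∀ j, fcoeff (v + w) j = fcoeff v j + fcoeff w j :=
  vk_add hv hw

lemma vk_sub' {K : ℕ} {v w : ℝ → ℝ} (hv : memVK K v) (hw : memVK K w) :
    memVK K (v - w) ∧ ∀ j, fcoeff (v - w) j = fcoeff v j - fcoeff w j :=
  vk_sub hv hw

lemma tiStep_coeff {K : ℕ} (b1 bb1 : ℝ → ℝ) (h κ : ℝ) (F : (ℝ → ℝ) → ℝ → ℝ)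
    {U : (ℝ → ℝ) × (ℝ → ℝ)} (hU1 : memVK K U.1) (hU2 : memVK K U.2)
    (hP : memVK K (F (tiHalf h U))) :
    (memVK K (tiStep b1 bb1 h κ F U).1 ∧ ∀ j, fcoeff (tiStep b1 bb1 h κ F U).1 j =
       (Real.cos (h * brk j) : ℂ) * fcoeff U.1 j
       + ((h * sinc (h * brk j) : ℝ) : ℂ) * fcoeff U.2 j
       + ((κ * h ^ 2 : ℝ) : ℂ) * ((bb1 (h * brk j) : ℂ) * fcoeff (F (tiHalf h U)) j))
    ∧ (memVK K (tiStep b1 bb1 h κ F U).2 ∧ ∀ j, fcoeff (tiStep b1 bb1 h κ F U).2 j =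
       ((-(brk j * Real.sin (h * brk j)) : ℝ) : ℂ) * fcoeff U.1 j
       + (Real.cos (h * brk j) : ℂ) * fcoeff U.2 j
       + ((κ * h : ℝ) : ℂ) * ((b1 (h * brk j) : ℂ) * fcoeff (F (tiHalf h U)) j)) := by
  constructor
  · have A1 := vk_fmul (ψ := fun ξ => Real.cos (h * ξ)) hU1
    have A2 := vk_fmul (ψ := fun ξ => h * sinc (h * ξ)) hU2
    have A3 := vk_fmul (ψ := fun ξ => bb1 (h * ξ)) hP
    have A4 := vk_add A1.1 A2.1
    have A5 := vk_smul (κ * h ^ 2) A3.1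
    have A6 := vk_add A4.1 A5.1
    refine ⟨A6.1, fun j => ?_⟩
    have e := A6.2 j
    rw [A4.2 j, A1.2 j, A2.2 j, A5.2 j, A3.2 j] at e
    exact e.trans (by push_cast; ring)
  · have A1 := vk_fmul (ψ := fun ξ => -(ξ * Real.sin (h * ξ))) hU1
    have A2 := vk_fmul (ψ := fun ξ => Real.cos (h * ξ)) hU2
    have A3 := vk_fmul (ψ := fun ξ => b1 (h * ξ)) hP
    have A4 := vk_add A1.1 A2.1
    have A5 := vk_smul (κ * h) A3.1
    have A6 := vk_add A4.1 A5.1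
    refine ⟨A6.1, fun j => ?_⟩
    have e := A6.2 j
    rw [A4.2 j, A1.2 j, A2.2 j, A5.2 j, A3.2 j] at e
    exact e.trans (by push_cast; ring)

/-- Lemma 5.1: energy identity with remainder for the fully discrete integrator. -/
theorem energy_identity_full (a : ℝ → ℝ) (b1 bb1 : ℝ → ℝ) (h κ : ℝ) (K : ℕ)
    (ha : ContDiff ℝ (⊤ : ℕ∞) a) (ha0 : a 0 = 0)
    (hsym : ∀ ξ : ℝ, 0 ≤ ξ → sinc ξ * b1 ξ = (1 + Real.cos ξ) * bb1 ξ)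
    (hh : 0 < h) (hsinc : ∀ j : ℤ, sinc (h * brk j) ≠ 0)
    (U V : (ℝ → ℝ) × (ℝ → ℝ))
    (hU : memVK K U.1 ∧ memVK K U.2) (hV : memVK K V.1 ∧ memVK K V.2) :
    pairNorm 1 (tiStep b1 bb1 h κ (fhatK K a) U - tiStep b1 bb1 h κ (fhatK K a) V) ^ 2 =
      pairNorm 1 (U - V) ^ 2 +
        κ * sobInner 1
            (fmul (fun ξ => 2 * b1 (h * ξ) / sinc (h * ξ))
              ((tiStep b1 bb1 h κ (fhatK K a) U).1 - U.1 -
                (tiStep b1 bb1 h κ (fhatK K a) V).1 + V.1))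
            (fhatK K a (tiHalf h U) - fhatK K a (tiHalf h V)) := by
  obtain ⟨hU1, hU2⟩ := hU
  obtain ⟨hV1, hV2⟩ := hV
  have hP : memVK K (fhatK K a (tiHalf h U)) := ⟨_, fun x => rfl⟩
  have hQ : memVK K (fhatK K a (tiHalf h V)) := ⟨_, fun x => rfl⟩
  have SU := tiStep_coeff (K := K) b1 bb1 h κ (fhatK K a) hU1 hU2 hP
  have SV := tiStep_coeff (K := K) b1 bb1 h κ (fhatK K a) hV1 hV2 hQ
  -- difference pairs
  have D1 := vk_sub' SU.1.1 SV.1.1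
  have D2 := vk_sub' SU.2.1 SV.2.1
  have W1 := vk_sub' hU1 hV1
  have W2 := vk_sub' hU2 hV2
  have G := vk_sub' hP hQ
  have R1 := vk_sub' SU.1.1 hU1
  have R2 := vk_sub' R1.1 SV.1.1
  have R3 := vk_add' R2.1 hV1
  have FR := vk_fmul (ψ := fun ξ => 2 * b1 (h * ξ) / sinc (h * ξ)) R3.1
  -- reduce norms to finite sums
  have hD1 : memVK K ((tiStep b1 bb1 h κ (fhatK K a) U - tiStep b1 bb1 h κ (fhatK K a) V).1) := D1.1
  have hD2 : memVK K ((tiStep b1 bb1 h κ (fhatK K a) U - tiStep b1 bb1 h κ (fhatK K a) V).2) := D2.1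
  rw [pairNorm_sq, pairNorm_sq,
    sobNormSq_fin (K := K) (1+1) hD1, sobNormSq_fin (K := K) 1 hD2,
    sobNormSq_fin (K := K) (1+1) (show memVK K ((U - V).1) from W1.1),
    sobNormSq_fin (K := K) 1 (show memVK K ((U - V).2) from W2.1),
    sobInner_fin (K := K) 1 FR.1]
  rw [← Finset.sum_add_distrib, Finset.mul_sum, ← Finset.sum_add_distrib, ← Finset.sum_add_distrib]
  apply Finset.sum_congr rfl
  intro j hj
  simp only [Prod.fst_sub, Prod.snd_sub, D1.2 j, D2.2 j, W1.2 j, W2.2 j, G.2 j,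
    FR.2 j, R3.2 j, R2.2 j, R1.2 j, SU.1.2 j, SU.2.2 j, SV.1.2 j, SV.2.2 j]
  -- per-mode scalar/complex algebra
  have hθ : 0 < brk j := brk_pos j
  have hhθ : h * brk j ≠ 0 := (mul_pos hh hθ).ne'
  have hs0 : sinc (h * brk j) ≠ 0 := hsinc j
  have h1 : Real.cos (h * brk j) ^ 2 + (h * brk j * sinc (h * brk j)) ^ 2 = 1 := by
    have hh1 := Real.sin_sq_add_cos_sq (h * brk j)
    rw [sin_eq_sinc hhθ] at hh1
    linarith
  have h2 : sinc (h * brk j) * b1 (h * brk j)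
      = (1 + Real.cos (h * brk j)) * bb1 (h * brk j) :=
    hsym _ (by positivity)
  have e4 : brk j ^ (2 * (1 + 1) : ℝ) = (brk j ^ 2) ^ 2 := by
    rw [show (2 * (1 + 1) : ℝ) = ((4 : ℕ) : ℝ) by norm_num, Real.rpow_natCast]
    ring
  have e2 : brk j ^ (2 * 1 : ℝ) = brk j ^ 2 := by
    rw [show (2 * 1 : ℝ) = ((2 : ℕ) : ℝ) by norm_num, Real.rpow_natCast]
  rw [sin_eq_sinc hhθ, e4, e2]
  set θ := brk j with hθdef
  set α := Real.cos (h * θ) with hαdef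
  set s0 := sinc (h * θ) with hs0def
  set β1 := b1 (h * θ) with hβ1def
  set β2 := bb1 (h * θ) with hβ2def
  have hα : 1 + α ≠ 0 := by
    intro h0
    have hsq : (h * θ * s0) ^ 2 = 0 := by nlinarith [h1]
    have hz : h * θ * s0 = 0 := by
      exact pow_eq_zero_iff two_ne_zero |>.1 hsq
    exact (mul_ne_zero hhθ hs0) hz
  have h3 : (1 - α) * β1 = h ^ 2 * θ ^ 2 * s0 * β2 := by
    apply mul_left_cancel₀ hα
    linear_combination (-β1) * h1 + (h ^ 2 * θ ^ 2 * s0) * h2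
  set r := 2 * β1 / s0 with hrdef
  have hr : r * s0 = 2 * β1 := by
    rw [hrdef]; field_simp
  have h5 : r * (α - 1) = -(2 * h ^ 2 * θ ^ 2 * β2) := by
    apply mul_left_cancel₀ hs0
    linear_combination (α - 1) * hr + (-2 : ℝ) * h3
  have hB : s0 * (h ^ 2 * θ ^ 2 * β2 ^ 2 + β1 ^ 2) = 2 * β1 * β2 := by
    apply mul_left_cancel₀ hs0
    linear_combination (β2 ^ 2) * h1 + (s0 * β1 + (α - 1) * β2) * h2
  have h6 : r * β2 = h ^ 2 * θ ^ 2 * β2 ^ 2 + β1 ^ 2 := by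
    apply mul_left_cancel₀ hs0
    linear_combination β2 * hr - hB
  set p1 := fcoeff U.1 j with hp1
  set p2 := fcoeff V.1 j with hp2
  set q1 := fcoeff U.2 j with hq1
  set q2 := fcoeff V.2 j with hq2
  set g1 := fcoeff (fhatK K a (tiHalf h U)) j with hg1
  set g2 := fcoeff (fhatK K a (tiHalf h V)) j with hg2
  have hn : ∀ z : ℂ, ‖z‖ ^ 2 = z.re ^ 2 + z.im ^ 2 := by
    intro z
    rw [Complex.sq_norm, Complex.normSq_apply]
    ring
  simp only [hn, Complex.add_re, Complex.add_im, Complex.sub_re, Complex.sub_im,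
    Complex.mul_re, Complex.mul_im, Complex.ofReal_re, Complex.ofReal_im,
    Complex.conj_re, Complex.conj_im, Complex.neg_re, Complex.neg_im,
    mul_zero, zero_mul, sub_zero, zero_sub, add_zero, zero_add, neg_zero, neg_neg]
  linear_combination
    ((θ ^ 2) ^ 2 * ((p1.re - p2.re) ^ 2 + (p1.im - p2.im) ^ 2)
        + θ ^ 2 * ((q1.re - q2.re) ^ 2 + (q1.im - q2.im) ^ 2)) * h1
    + (-(2 * κ * h ^ 2 * (θ ^ 2) ^ 2 *
        ((p1.re - p2.re) * (g1.re - g2.re) + (p1.im - p2.im) * (g1.im - g2.im)))) * h2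
    + (-(κ * θ ^ 2 *
        ((p1.re - p2.re) * (g1.re - g2.re) + (p1.im - p2.im) * (g1.im - g2.im)))) * h5
    + (-(2 * κ * h * θ ^ 2 *
        ((q1.re - q2.re) * (g1.re - g2.re) + (q1.im - q2.im) * (g1.im - g2.im)))) * h3
    + (-(κ * h * θ ^ 2 *
        ((q1.re - q2.re) * (g1.re - g2.re) + (q1.im - q2.im) * (g1.im - g2.im)))) * hr
    + (-(κ ^ 2 * h ^ 2 * θ ^ 2 * ((g1.re - g2.re) ^ 2 + (g1.im - g2.im) ^ 2))) * h6
end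
end

section
/- The integrator TI3 satisfies Assumption A1. Let b̄₁(ξ²) = ½ sinc(ξ) sinc(ξ/2)² and b₁(ξ²) = sinc(ξ) sinc(ξ/2) cos(ξ/2). Then the symmetry condition sinc(ξ) b₁(ξ²) = (1 + cos ξ) b̄₁(ξ²) holds for all ξ ≥ 0, and there exists a constant c > 0 such that for all ξ ≥ 0: |ξ b̄₁(ξ²)| ≤ c, |ξ² b̄₁(ξ²)| ≤ c, |b̄₁(ξ²) − ½ sinc(ξ/2)| ≤ c ξ, |ξ b₁(ξ²)| ≤ c, |b₁(ξ²) − cos(ξ/2)| ≤ c ξ², and |ξ b₁(ξ²)/sinc(ξ)| ≤ c whenever sinc(ξ) ≠ 0 (indeed ξ b₁(ξ²)/sinc(ξ) = sin ξ wherever sinc(ξ) ≠ 0). -/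
open scoped Real
open Complex

noncomputable section

/-! With `S = sinc (ξ/2)` and `C = cos (ξ/2)` the doubling formula gives `sinc ξ = S C`, so
`b₁(ξ²) = S² C²` and `b̄₁(ξ²) = ½ S³ C`; the symmetry condition is then `cos ξ = 2 C² - 1`.
Both consistency bounds factor through `S² C - 1`, which is `O(ξ²)` near `0` because
`sinc x ≥ 1 - x²/6` and `cos x ≥ 1 - x²/2`, and bounded by `2` everywhere. The growth bounds
follow from `ξ sinc ξ = sin ξ` and `ξ S = 2 sin (ξ/2)`. -/

theorem mul_sinc (x : ℝ) : x * sinc x = Real.sin x := by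
  rcases eq_or_ne x 0 with rfl | hx
  · simp
  · rw [show sinc x = Real.sin x / x from Real.sinc_of_ne_zero hx]
    field_simp

theorem abs_sinc_le_one (x : ℝ) : |sinc x| ≤ 1 := Real.abs_sinc_le_one x

theorem sinc_eq_sinc_half_mul_cos_half (x : ℝ) : sinc x = sinc (x / 2) * Real.cos (x / 2) := by
  rcases eq_or_ne x 0 with rfl | hx
  · simp [sinc]
  · apply mul_left_cancel₀ hx
    calc x * sinc x = Real.sin (2 * (x / 2)) := by rw [mul_sinc]; ring_nf
      _ = 2 * (x / 2 * sinc (x / 2)) * Real.cos (x / 2) := by rw [mul_sinc, Real.sin_two_mul]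
      _ = x * (sinc (x / 2) * Real.cos (x / 2)) := by ring

theorem one_sub_sq_div_six_le_sinc (x : ℝ) : 1 - x ^ 2 / 6 ≤ sinc x := by
  wlog hx : 0 ≤ x generalizing x
  · simpa [sinc, Real.sinc_neg] using this (-x) (by linarith)
  rcases hx.eq_or_lt with rfl | hx
  · simp [sinc]
  · rw [show sinc x = Real.sin x / x from Real.sinc_of_ne_zero hx.ne', le_div_iff₀ hx]
    nlinarith [Real.sin_ge_sub_cube hx.le]

theorem abs_sinc_sq_mul_cos_sub_one_le_two (x : ℝ) : |sinc x ^ 2 * Real.cos x - 1| ≤ 2 := by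
  have h : |sinc x ^ 2 * Real.cos x| ≤ 1 := by
    rw [abs_mul, abs_pow]
    exact mul_le_one₀ (pow_le_one₀ (abs_nonneg _) (abs_sinc_le_one x)) (abs_nonneg _)
      (Real.abs_cos_le_one x)
  calc |sinc x ^ 2 * Real.cos x - 1| ≤ |sinc x ^ 2 * Real.cos x| + |1| := abs_sub _ _
    _ ≤ 2 := by rw [abs_one]; linarith

theorem abs_sinc_sq_mul_cos_sub_one_le_sq {x : ℝ} (hx : |x| ≤ 1) :
    |sinc x ^ 2 * Real.cos x - 1| ≤ x ^ 2 := by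
  have hx2 : x ^ 2 ≤ 1 := by nlinarith [sq_abs x, abs_nonneg x]
  have hS : 1 - x ^ 2 / 6 ≤ sinc x := one_sub_sq_div_six_le_sinc x
  have hC : 1 - x ^ 2 / 2 ≤ Real.cos x := Real.one_sub_sq_div_two_le_cos
  have hS2 : (1 - x ^ 2 / 6) ^ 2 ≤ sinc x ^ 2 := pow_le_pow_left₀ (by linarith) hS 2
  have lower : (1 - x ^ 2 / 6) ^ 2 * (1 - x ^ 2 / 2) ≤ sinc x ^ 2 * Real.cos x :=
    mul_le_mul hS2 hC (by linarith) (sq_nonneg _)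
  have upper : sinc x ^ 2 * Real.cos x ≤ 1 := by
    have := abs_sinc_le_one x
    nlinarith [Real.cos_le_one x, sq_abs (sinc x), abs_nonneg (sinc x)]
  have ht : 0 ≤ x ^ 2 * (1 - x ^ 2) := mul_nonneg (sq_nonneg x) (by linarith)
  rw [abs_le]
  constructor <;> nlinarith [sq_nonneg x, mul_nonneg (sq_nonneg x) ht]

theorem abs_sinc_sq_mul_cos_sub_one_le_two_mul_sq (x : ℝ) :
    |sinc x ^ 2 * Real.cos x - 1| ≤ 2 * x ^ 2 := by
  rcases le_or_gt |x| 1 with hx | hx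
  · linarith [abs_sinc_sq_mul_cos_sub_one_le_sq hx, sq_nonneg x]
  · nlinarith [abs_sinc_sq_mul_cos_sub_one_le_two x, sq_abs x]

theorem abs_sinc_sq_mul_cos_sub_one_le_two_mul_abs (x : ℝ) :
    |sinc x ^ 2 * Real.cos x - 1| ≤ 2 * |x| := by
  rcases le_or_gt |x| 1 with hx | hx
  · nlinarith [abs_sinc_sq_mul_cos_sub_one_le_sq hx, sq_abs x, abs_nonneg x]
  · linarith [abs_sinc_sq_mul_cos_sub_one_le_two x]

-- The coefficient functions of TI3 as functions of `ξ`: `ti3B1 ξ = b₁(ξ²)`, `ti3Bbar1 ξ = b̄₁(ξ²)`.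
def ti3B1 (ξ : ℝ) : ℝ := sinc ξ * sinc (ξ / 2) * Real.cos (ξ / 2)

def ti3Bbar1 (ξ : ℝ) : ℝ := 1 / 2 * (sinc ξ * sinc (ξ / 2) ^ 2)

theorem sinc_mul_ti3B1 (ξ : ℝ) : sinc ξ * ti3B1 ξ = (1 + Real.cos ξ) * ti3Bbar1 ξ := by
  have hcos : Real.cos ξ = 2 * Real.cos (ξ / 2) ^ 2 - 1 := by
    rw [← Real.cos_two_mul]; ring_nf
  rw [ti3B1, ti3Bbar1, hcos, sinc_eq_sinc_half_mul_cos_half ξ]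
  ring

theorem mul_ti3B1 (ξ : ℝ) : ξ * ti3B1 ξ = Real.sin ξ * sinc ξ := by
  rw [ti3B1, mul_assoc, ← sinc_eq_sinc_half_mul_cos_half, ← mul_sinc ξ]
  ring

theorem mul_ti3B1_div_sinc {ξ : ℝ} (h : sinc ξ ≠ 0) : ξ * ti3B1 ξ / sinc ξ = Real.sin ξ := by
  rw [mul_ti3B1, mul_div_cancel_right₀ _ h]

theorem abs_mul_ti3B1_le_one (ξ : ℝ) : |ξ * ti3B1 ξ| ≤ 1 := by
  rw [mul_ti3B1, abs_mul]
  exact mul_le_one₀ (Real.abs_sin_le_one ξ) (abs_nonneg _) (abs_sinc_le_one ξ)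

theorem abs_ti3B1_sub_cos_half_le (ξ : ℝ) : |ti3B1 ξ - Real.cos (ξ / 2)| ≤ ξ ^ 2 / 2 := by
  have h : ti3B1 ξ - Real.cos (ξ / 2) =
      Real.cos (ξ / 2) * (sinc (ξ / 2) ^ 2 * Real.cos (ξ / 2) - 1) := by
    rw [ti3B1, sinc_eq_sinc_half_mul_cos_half ξ]; ring
  calc |ti3B1 ξ - Real.cos (ξ / 2)|
      ≤ 1 * (2 * (ξ / 2) ^ 2) := by
        rw [h, abs_mul]
        exact mul_le_mul (Real.abs_cos_le_one _) (abs_sinc_sq_mul_cos_sub_one_le_two_mul_sq _)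
          (abs_nonneg _) zero_le_one
    _ = ξ ^ 2 / 2 := by ring

theorem abs_mul_ti3Bbar1_le (ξ : ℝ) : |ξ * ti3Bbar1 ξ| ≤ 1 / 2 := by
  have h : ξ * ti3Bbar1 ξ = 1 / 2 * (Real.sin ξ * sinc (ξ / 2) ^ 2) := by
    rw [ti3Bbar1, ← mul_sinc ξ]; ring
  rw [h, abs_mul, abs_mul, abs_pow, abs_of_pos one_half_pos]
  have : |Real.sin ξ| * |sinc (ξ / 2)| ^ 2 ≤ 1 :=
    mul_le_one₀ (Real.abs_sin_le_one ξ) (by positivity)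
      (pow_le_one₀ (abs_nonneg _) (abs_sinc_le_one (ξ / 2)))
  linarith

theorem abs_sq_mul_ti3Bbar1_le (ξ : ℝ) : |ξ ^ 2 * ti3Bbar1 ξ| ≤ 2 := by
  have h : ξ ^ 2 * ti3Bbar1 ξ = 2 * (sinc ξ * Real.sin (ξ / 2) ^ 2) := by
    rw [ti3Bbar1, ← mul_sinc (ξ / 2)]; ring
  rw [h, abs_mul, abs_mul, abs_pow, abs_two]
  have : |sinc ξ| * |Real.sin (ξ / 2)| ^ 2 ≤ 1 :=
    mul_le_one₀ (abs_sinc_le_one ξ) (by positivity)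
      (pow_le_one₀ (abs_nonneg _) (Real.abs_sin_le_one (ξ / 2)))
  linarith

theorem abs_ti3Bbar1_sub_half_sinc_half_le (ξ : ℝ) :
    |ti3Bbar1 ξ - 1 / 2 * sinc (ξ / 2)| ≤ |ξ| / 2 := by
  have h : ti3Bbar1 ξ - 1 / 2 * sinc (ξ / 2) =
      1 / 2 * (sinc (ξ / 2) * (sinc (ξ / 2) ^ 2 * Real.cos (ξ / 2) - 1)) := by
    rw [ti3Bbar1, sinc_eq_sinc_half_mul_cos_half ξ]; ring
  have hK := abs_sinc_sq_mul_cos_sub_one_le_two_mul_abs (ξ / 2)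
  rw [abs_div, abs_two] at hK
  rw [h, abs_mul, abs_mul, abs_of_pos one_half_pos]
  have := mul_le_mul (abs_sinc_le_one (ξ / 2)) hK (abs_nonneg _) zero_le_one
  linarith

/-- The integrator TI3, with `b̄₁(ξ²) = ½ sinc(ξ) sinc(ξ/2)²` and
`b₁(ξ²) = sinc(ξ) sinc(ξ/2) cos(ξ/2)`, satisfies Assumption A1; moreover
`ξ b₁(ξ²)/sinc ξ = sin ξ` wherever `sinc ξ ≠ 0`. -/
theorem TI3_satisfies_A1 :
    ∃ c : ℝ,
      AssumptionA1 (fun ξ => sinc ξ * sinc (ξ / 2) * Real.cos (ξ / 2))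
        (fun ξ => 1 / 2 * (sinc ξ * sinc (ξ / 2) ^ 2)) c ∧
      ∀ ξ : ℝ, 0 ≤ ξ → sinc ξ ≠ 0 →
        ξ * (sinc ξ * sinc (ξ / 2) * Real.cos (ξ / 2)) / sinc ξ = Real.sin ξ := by
  refine ⟨2, ⟨fun ξ _ => sinc_mul_ti3B1 ξ, two_pos, fun ξ hξ => ⟨?_, ?_, ?_, ?_, ?_, fun h => ?_⟩⟩,
    fun ξ _ h => mul_ti3B1_div_sinc h⟩
  · exact (abs_mul_ti3Bbar1_le ξ).trans (by norm_num)
  · exact abs_sq_mul_ti3Bbar1_le ξ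
  · exact (abs_ti3Bbar1_sub_half_sinc_half_le ξ).trans (by rw [abs_of_nonneg hξ]; linarith)
  · exact (abs_mul_ti3B1_le_one ξ).trans one_le_two
  · exact (abs_ti3B1_sub_cos_half_le ξ).trans (by nlinarith [sq_nonneg ξ])
  · show |ξ * ti3B1 ξ / sinc ξ| ≤ 2
    rw [mul_ti3B1_div_sinc h]
    exact (Real.abs_sin_le_one ξ).trans one_le_two
end
end

section
/- The integrator TI2 satisfies all requirements of Assumption A1 except the last one. Let b̄₁(ξ²) = ½ sinc(ξ) sinc(ξ/2) and b₁(ξ²) = sinc(ξ) cos(ξ/2). Then: (i) the symmetry condition sinc(ξ) b₁(ξ²) = (1 + cos ξ) b̄₁(ξ²) holds for all ξ ≥ 0; (ii) there exists c > 0 such that for all ξ ≥ 0: |ξ b̄₁(ξ²)| ≤ c, |ξ² b̄₁(ξ²)| ≤ c, |b̄₁(ξ²) − ½ sinc(ξ/2)| ≤ c ξ, |ξ b₁(ξ²)| ≤ c, and |b₁(ξ²) − cos(ξ/2)| ≤ c ξ²; but (iii) the function ξ ↦ ξ b₁(ξ²)/sinc(ξ) = ξ cos(ξ/2) is unbounded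 on the set {ξ ≥ 0 : sinc(ξ) ≠ 0}, so no constant c satisfies the last inequality of Assumption A1. -/
open scoped Real
open Complex

noncomputable section

/-!
The double-angle formula `sinc ξ = cos (ξ/2) sinc (ξ/2)` gives the symmetry condition, and
together with `|sinc ξ| ≤ 1`, `|ξ sinc ξ| ≤ 1` and `|sinc ξ - 1| ≤ min (ξ²/6) |ξ|` it gives the
five bounds with `c = 1`. Off the zeros of `sinc`, `ξ b₁(ξ²) / sinc ξ = ξ cos (ξ/2)`, which equals
`ξ/2` at `ξ = 2π/3 + 4πn`, where `sin ξ > 0`; hence it is unbounded.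
-/

lemma sinc_eq_real_sinc : sinc = Real.sinc := rfl

namespace Real

lemma sinc_eq_cos_half_mul_sinc_half (x : ℝ) : sinc x = cos (x / 2) * sinc (x / 2) := by
  rcases eq_or_ne x 0 with rfl | hx
  · simp
  have hx2 : x / 2 ≠ 0 := div_ne_zero hx two_ne_zero
  have h_sin : sin x = 2 * sin (x / 2) * cos (x / 2) := by
    rw [← sin_two_mul, mul_div_cancel₀ x two_ne_zero]
  rw [sinc_of_ne_zero hx, sinc_of_ne_zero hx2, h_sin]
  field_simp

lemma abs_mul_sinc_le_one (x : ℝ) : |x * sinc x| ≤ 1 := by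
  rcases eq_or_ne x 0 with rfl | hx
  · simp
  rw [sinc_of_ne_zero hx, mul_div_cancel₀ _ hx]
  exact abs_sin_le_one x

lemma abs_sinc_sub_one_le_sq_div_six (x : ℝ) : |sinc x - 1| ≤ x ^ 2 / 6 := by
  rcases eq_or_ne x 0 with rfl | hx
  · simp
  rw [sinc_of_ne_zero hx, div_sub_one hx, abs_div, abs_sub_comm, div_le_iff₀ (abs_pos.mpr hx)]
  calc |x - sin x| ≤ |x| ^ 3 / 6 := abs_sub_sin_le x
    _ = x ^ 2 / 6 * |x| := by rw [← sq_abs x]; ring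

lemma abs_sinc_sub_one_le_abs (x : ℝ) : |sinc x - 1| ≤ |x| := by
  have h_sq := abs_sinc_sub_one_le_sq_div_six x
  have h_two : |sinc x - 1| ≤ 2 := by
    rw [abs_le]; constructor <;> linarith [neg_one_le_sinc x, sinc_le_one x]
  rw [← sq_abs x] at h_sq
  rcases le_total |x| 2 with h | h
  · nlinarith [abs_nonneg x]
  · linarith

lemma sinc_ne_zero_of_sin_ne_zero {x : ℝ} (h : sin x ≠ 0) : sinc x ≠ 0 := by
  rcases eq_or_ne x 0 with rfl | hx
  · simp
  rw [sinc_of_ne_zero hx]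
  exact div_ne_zero h hx

end Real

lemma exists_sinc_ne_zero_and_lt_mul_cos_half (c : ℝ) :
    ∃ ξ : ℝ, 0 ≤ ξ ∧ sinc ξ ≠ 0 ∧ c < ξ * Real.cos (ξ / 2) := by
  obtain ⟨n, hn⟩ := exists_nat_gt c
  refine ⟨2 * π / 3 + (2 * n : ℕ) * (2 * π), by positivity, ?_, ?_⟩
  · rw [sinc_eq_real_sinc]
    refine Real.sinc_ne_zero_of_sin_ne_zero ?_
    rw [Real.sin_add_nat_mul_two_pi]
    exact (Real.sin_pos_of_pos_of_lt_pi (by positivity) (by linarith [Real.pi_pos])).ne'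
  · rw [show (2 * π / 3 + (2 * n : ℕ) * (2 * π)) / 2 = π / 3 + n * (2 * π) by push_cast; ring,
      Real.cos_add_nat_mul_two_pi, Real.cos_pi_div_three]
    push_cast
    nlinarith [Real.pi_gt_three, (Nat.cast_nonneg n : (0 : ℝ) ≤ n)]

lemma TI2_symmetry (ξ : ℝ) :
    sinc ξ * (sinc ξ * Real.cos (ξ / 2)) =
      (1 + Real.cos ξ) * (1 / 2 * (sinc ξ * sinc (ξ / 2))) := by
  have h_cos_sq := Real.cos_sq (ξ / 2)
  rw [mul_div_cancel₀ ξ two_ne_zero] at h_cos_sq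
  rw [sinc_eq_real_sinc]
  linear_combination (Real.sinc ξ * Real.cos (ξ / 2)) * Real.sinc_eq_cos_half_mul_sinc_half ξ +
    (Real.sinc ξ * Real.sinc (ξ / 2)) * h_cos_sq

lemma TI2_coefficient_bounds {ξ : ℝ} (hξ : 0 ≤ ξ) :
    |ξ * (1 / 2 * (sinc ξ * sinc (ξ / 2)))| ≤ 1 ∧
      |ξ ^ 2 * (1 / 2 * (sinc ξ * sinc (ξ / 2)))| ≤ 1 ∧
        |1 / 2 * (sinc ξ * sinc (ξ / 2)) - 1 / 2 * sinc (ξ / 2)| ≤ ξ ∧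
          |ξ * (sinc ξ * Real.cos (ξ / 2))| ≤ 1 ∧
            |sinc ξ * Real.cos (ξ / 2) - Real.cos (ξ / 2)| ≤ ξ ^ 2 := by
  rw [sinc_eq_real_sinc]
  have h_mul := Real.abs_mul_sinc_le_one ξ
  have h_mul_half := Real.abs_mul_sinc_le_one (ξ / 2)
  have h_half := Real.abs_sinc_le_one (ξ / 2)
  have h_cos := Real.abs_cos_le_one (ξ / 2)
  have h_sub_sq := Real.abs_sinc_sub_one_le_sq_div_six ξ
  have h_sub := Real.abs_sinc_sub_one_le_abs ξ
  rw [abs_of_nonneg hξ] at h_sub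
  refine ⟨?_, ?_, ?_, ?_, ?_⟩
  · rw [show ξ * (1 / 2 * (Real.sinc ξ * Real.sinc (ξ / 2))) =
      ξ * Real.sinc ξ * Real.sinc (ξ / 2) / 2 by ring, abs_div, abs_mul, abs_two]
    nlinarith [abs_nonneg (ξ * Real.sinc ξ), abs_nonneg (Real.sinc (ξ / 2))]
  · rw [show ξ ^ 2 * (1 / 2 * (Real.sinc ξ * Real.sinc (ξ / 2))) =
      ξ * Real.sinc ξ * (ξ / 2 * Real.sinc (ξ / 2)) by ring, abs_mul]
    exact mul_le_one₀ h_mul (abs_nonneg _) h_mul_half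
  · rw [show 1 / 2 * (Real.sinc ξ * Real.sinc (ξ / 2)) - 1 / 2 * Real.sinc (ξ / 2) =
      Real.sinc (ξ / 2) * (Real.sinc ξ - 1) / 2 by ring, abs_div, abs_mul, abs_two]
    nlinarith [abs_nonneg (Real.sinc ξ - 1), abs_nonneg (Real.sinc (ξ / 2))]
  · rw [← mul_assoc, abs_mul]
    exact mul_le_one₀ h_mul (abs_nonneg _) h_cos
  · rw [show Real.sinc ξ * Real.cos (ξ / 2) - Real.cos (ξ / 2) =
      Real.cos (ξ / 2) * (Real.sinc ξ - 1) by ring, abs_mul]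
    nlinarith [abs_nonneg (Real.sinc ξ - 1), abs_nonneg (Real.cos (ξ / 2)), sq_nonneg ξ]

/-- The integrator TI2, with `b̄₁(ξ²) = ½ sinc(ξ) sinc(ξ/2)` and
`b₁(ξ²) = sinc(ξ) cos(ξ/2)`, satisfies all requirements of Assumption A1 except the
last one: (i) the symmetry condition holds; (ii) the first five bounds hold with some
`c > 0`; (iii) `ξ b₁(ξ²)/sinc ξ = ξ cos(ξ/2)` wherever `sinc ξ ≠ 0`, this function is
unbounded on `{ξ ≥ 0 : sinc ξ ≠ 0}`, and no constant satisfies the last inequality. -/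
theorem TI2_almost_A1 :
    (∀ ξ : ℝ, 0 ≤ ξ →
        sinc ξ * (sinc ξ * Real.cos (ξ / 2)) =
          (1 + Real.cos ξ) * (1 / 2 * (sinc ξ * sinc (ξ / 2)))) ∧
      (∃ c : ℝ, 0 < c ∧ ∀ ξ : ℝ, 0 ≤ ξ →
          |ξ * (1 / 2 * (sinc ξ * sinc (ξ / 2)))| ≤ c ∧
            |ξ ^ 2 * (1 / 2 * (sinc ξ * sinc (ξ / 2)))| ≤ c ∧
              |1 / 2 * (sinc ξ * sinc (ξ / 2)) - 1 / 2 * sinc (ξ / 2)| ≤ c * ξ ∧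
                |ξ * (sinc ξ * Real.cos (ξ / 2))| ≤ c ∧
                  |sinc ξ * Real.cos (ξ / 2) - Real.cos (ξ / 2)| ≤ c * ξ ^ 2) ∧
      (∀ ξ : ℝ, sinc ξ ≠ 0 →
        ξ * (sinc ξ * Real.cos (ξ / 2)) / sinc ξ = ξ * Real.cos (ξ / 2)) ∧
      (∀ c : ℝ, ∃ ξ : ℝ, 0 ≤ ξ ∧ sinc ξ ≠ 0 ∧
        c < |ξ * (sinc ξ * Real.cos (ξ / 2)) / sinc ξ|) ∧
      ¬∃ c : ℝ, ∀ ξ : ℝ, 0 ≤ ξ → sinc ξ ≠ 0 →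
        |ξ * (sinc ξ * Real.cos (ξ / 2)) / sinc ξ| ≤ c := by
  have h_div (ξ : ℝ) (h : sinc ξ ≠ 0) :
      ξ * (sinc ξ * Real.cos (ξ / 2)) / sinc ξ = ξ * Real.cos (ξ / 2) := by
    field_simp
  have h_unbdd (c : ℝ) : ∃ ξ : ℝ, 0 ≤ ξ ∧ sinc ξ ≠ 0 ∧
      c < |ξ * (sinc ξ * Real.cos (ξ / 2)) / sinc ξ| := by
    obtain ⟨ξ, hξ, hs, hc⟩ := exists_sinc_ne_zero_and_lt_mul_cos_half c
    exact ⟨ξ, hξ, hs, by rw [h_div ξ hs]; exact hc.trans_le (le_abs_self _)⟩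
  refine ⟨fun ξ _ => TI2_symmetry ξ, ⟨1, one_pos, fun ξ hξ => ?_⟩, h_div, h_unbdd,
    fun ⟨c, hc⟩ => ?_⟩
  · simpa only [one_mul] using TI2_coefficient_bounds hξ
  · obtain ⟨ξ, hξ, hs, hlt⟩ := h_unbdd c
    exact (hc ξ hξ hs).not_gt hlt
end
end
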